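/- arXiv:2603.02279 — 4 statements merged into one kernel-verified Lean document; each statement's English description precedes it below -/
import Mathlib

section
/- Let K ⊆ L be algebraically closed fields and let P be a prime ideal of the polynomial ring K[X_1,…,X_n]. Then the extension P·L[X_1,…,X_n], i.e. the ideal of L[X_1,…,X_n] generated by the image of P under the inclusion K[X_1,…,X_n] ⊆ L[X_1,…,X_n], is a prime ideal of L[X_1,…,X_n]. -/
open TensorProduct

/-! Fix a `K`-basis `(bᵢ)` of `L`, so that every `z : A ⊗[K] L` has unique coordinates `zᵢ : A`.
A `K`-point `φ : A → K` induces `A ⊗[K] L → L`, `z ↦ ∑ φ(zᵢ) bᵢ`, which vanishes iff every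
`φ(zᵢ)` does. If `x y = 0` then, `L` being a domain, at each point either all `xᵢ` or all `yⱼ`
vanish, so every product `xᵢ yⱼ` vanishes at every point. For `A = K[X] ⧸ P` with `K`
algebraically closed, the Nullstellensatz says that the points separate the elements of `A`, so
`xᵢ yⱼ = 0` in the domain `A`, whence `x = 0` or `y = 0`. Finally `P · L[X]` is the kernel of
`K[X] ⊗[K] L → A ⊗[K] L`. -/

namespace Algebra.TensorProduct

variable {K A L : Type*} [Field K] [CommRing A] [Algebra K A] [CommRing L] [Algebra K L]

noncomputable abbrev evalLeft (φ : A →ₐ[K] K) : A ⊗[K] L →ₐ[K] L :=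
  productMap ((Algebra.ofId K L).comp φ) (AlgHom.id K L)

theorem evalLeft_eq_repr_symm {ι : Type*} (b : Module.Basis ι K L) (φ : A →ₐ[K] K)
    (z : A ⊗[K] L) :
    evalLeft φ z = b.repr.symm (((basis A b).repr z).mapRange φ (map_zero φ)) := by
  induction z using TensorProduct.induction_on with
  | zero => simp
  | tmul a l =>
    have hcoord : (a • (b.repr l).mapRange (algebraMap K A) (map_zero _)).mapRange φ (map_zero φ) =
        φ a • b.repr l := by ext; simp
    rw [basis_repr_tmul, hcoord, map_smul, LinearEquiv.symm_apply_apply, Algebra.smul_def]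
    rfl
  | add x y hx hy => simp [hx, hy, Finsupp.mapRange_add]

theorem evalLeft_eq_zero_iff {ι : Type*} (b : Module.Basis ι K L) (φ : A →ₐ[K] K)
    (z : A ⊗[K] L) : evalLeft φ z = 0 ↔ ∀ i, φ ((basis A b).repr z i) = 0 := by
  rw [evalLeft_eq_repr_symm b, LinearEquiv.map_eq_zero_iff, Finsupp.ext_iff]
  rfl

theorem isDomain_of_forall_algHom_eq_zero [IsDomain A] [IsDomain L]
    (h : ∀ a : A, (∀ φ : A →ₐ[K] K, φ a = 0) → a = 0) : IsDomain (A ⊗[K] L) := by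
  let b := Module.Basis.ofVectorSpace K L
  let c := basis A b
  obtain ⟨φ⟩ : Nonempty (A →ₐ[K] K) := by
    by_contra! hempty
    exact one_ne_zero (h 1 fun φ => (hempty.false φ).elim)
  have : Nontrivial (A ⊗[K] L) := (evalLeft (L := L) φ).toRingHom.domain_nontrivial
  have : NoZeroDivisors (A ⊗[K] L) := by
    refine ⟨fun {x y} hxy => ?_⟩
    have hcoord : ∀ i j, c.repr x i * c.repr y j = 0 := fun i j => h _ fun ψ => by
      have hψ := congrArg (evalLeft ψ) hxy
      rw [map_mul, map_zero, mul_eq_zero, evalLeft_eq_zero_iff b, evalLeft_eq_zero_iff b] at hψ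
      rcases hψ with hx | hy
      · rw [map_mul, hx i, zero_mul]
      · rw [map_mul, hy j, mul_zero]
    by_contra! hne
    obtain ⟨i, hi⟩ := Finsupp.ne_iff.mp (c.repr.map_ne_zero_iff.mpr hne.1)
    obtain ⟨j, hj⟩ := Finsupp.ne_iff.mp (c.repr.map_ne_zero_iff.mpr hne.2)
    exact mul_ne_zero hi hj (hcoord i j)
  exact NoZeroDivisors.to_isDomain _

end Algebra.TensorProduct

namespace MvPolynomial

variable {K L σ : Type*} [Field K] [IsAlgClosed K] [Finite σ]

theorem eq_zero_of_forall_algHom_quotient_eq_zero {I : Ideal (MvPolynomial σ K)} (hI : I.IsRadical)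
    (a : MvPolynomial σ K ⧸ I) (h : ∀ φ : MvPolynomial σ K ⧸ I →ₐ[K] K, φ a = 0) : a = 0 := by
  obtain ⟨f, rfl⟩ := Ideal.Quotient.mk_surjective a
  rw [Ideal.Quotient.eq_zero_iff_mem, ← hI.radical, ← vanishingIdeal_zeroLocus_eq_radical (K := K),
    mem_vanishingIdeal_iff]
  intro p hp
  exact h (Ideal.Quotient.liftₐ I (aeval p) fun q hq => mem_zeroLocus_iff.mp hp q hq)

variable [CommRing L] [IsDomain L] [Algebra K L]

theorem isPrime_map_includeLeft (P : Ideal (MvPolynomial σ K)) [hP : P.IsPrime] :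
    (P.map (Algebra.TensorProduct.includeLeft :
      MvPolynomial σ K →ₐ[K] MvPolynomial σ K ⊗[K] L)).IsPrime := by
  have := Algebra.TensorProduct.isDomain_of_forall_algHom_eq_zero (L := L)
    (eq_zero_of_forall_algHom_quotient_eq_zero hP.isRadical)
  have hker : RingHom.ker (Ideal.Quotient.mkₐ K P) = P := Ideal.Quotient.mkₐ_ker K P
  rw [← hker, ← Algebra.TensorProduct.rTensor_ker _ (Ideal.Quotient.mkₐ_surjective K P)]
  exact RingHom.ker_isPrime _

theorem isPrime_map_map_algebraMap (P : Ideal (MvPolynomial σ K)) [P.IsPrime] :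
    (P.map (map (algebraMap K L))).IsPrime := by
  let e := (Algebra.TensorProduct.comm K (MvPolynomial σ K) L).toRingEquiv.trans
    (algebraTensorAlgEquiv K L).toRingEquiv
  let incl : MvPolynomial σ K →ₐ[K] MvPolynomial σ K ⊗[K] L := Algebra.TensorProduct.includeLeft
  have he : (e : MvPolynomial σ K ⊗[K] L →+* MvPolynomial σ L).comp incl.toRingHom =
      map (algebraMap K L) :=
    RingHom.ext fun r => by simp [e, incl]
  have : (P.map incl.toRingHom).IsPrime := isPrime_map_includeLeft P
  rw [← he, ← Ideal.map_map]
  exact Ideal.map_isPrime_of_equiv e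

end MvPolynomial

theorem stmt4_general (K L : Type*) [Field K] [Field L] [IsAlgClosed K]
    [Algebra K L] (n : ℕ)
    (P : Ideal (MvPolynomial (Fin n) K)) (hP : P.IsPrime) :
    (P.map (MvPolynomial.map (algebraMap K L))).IsPrime :=
  MvPolynomial.isPrime_map_map_algebraMap P

/-- if `K ⊆ L` is an extension of algebraically closed fields and `P` is a
prime ideal of `K[X₁,…,Xₙ]`, then its extension to `L[X₁,…,Xₙ]` is prime. -/
theorem stmt4 (K L : Type*) [Field K] [Field L] [IsAlgClosed K] [IsAlgClosed L]
    [Algebra K L] (n : ℕ)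
    (P : Ideal (MvPolynomial (Fin n) K)) (hP : P.IsPrime) :
    (P.map (MvPolynomial.map (algebraMap K L))).IsPrime :=
  stmt4_general K L n P hP
end

section
/- Let K ⊆ L be algebraically closed fields and let I be a radical ideal of K[X_1,…,X_n] with minimal prime decomposition I = P_1 ∩ ⋯ ∩ P_m, where the P_i are pairwise distinct prime ideals none of which contains the intersection of the others. Then: (i) I·L[X_1,…,X_n] = (P_1·L[X_1,…,X_n]) ∩ ⋯ ∩ (P_m·L[X_1,…,X_n]); (ii) I·L[X_1,…,X_n] is a radical ideal; (iii) each P_i·L[X_1,…,X_n] is a prime ideal; (iv) the ideals P_i·L[X_1,…,X_n] are pairwise distinct and none of them contains the intersection of the others, so this is the minimal prime decomposition of I·L[X_1,…,X_n]. -/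
/-!
Fix a `K`-basis `b` of `L`. Applying `b.coord t` to every coefficient splits a polynomial over `L`
into its coordinates, polynomials over `K`, and `f` lies in `J·L[X]` iff all coordinates of `f`
lie in `J`. Hence extension of ideals commutes with intersections and is injective and
order-reflecting, which gives (i), (ii) and (iv) once (iii) is known. For (iii), let `p * q ∈ P·L[X]`.
At every `K`-point `x` of `V(P)` one of `p(x)`, `q(x)` vanishes, so all coordinates of `p` or all
coordinates of `q` vanish at `x`. Thus the product of the ideals generated by the coordinates of `p`
and of `q` vanishes on `V(P)`, so it lies in `P` by the Nullstellensatz, and `P` is prime.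
-/

open MvPolynomial

namespace MvPolynomial

section BasisCoord

variable {R S ι σ : Type*} [CommRing R] [CommRing S] [Algebra R S] (b : Module.Basis ι R S)

noncomputable def basisCoord (t : ι) : MvPolynomial σ S →ₗ[R] MvPolynomial σ R :=
  (AddMonoidAlgebra.coeffLinearEquiv R).symm.toLinearMap ∘ₗ
    Finsupp.mapRange.linearMap (b.coord t) ∘ₗ (AddMonoidAlgebra.coeffLinearEquiv R).toLinearMap

@[simp]
theorem coeff_basisCoord (t : ι) (f : MvPolynomial σ S) (d : σ →₀ ℕ) :
    coeff d (basisCoord b t f) = b.coord t (coeff d f) :=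
  rfl

theorem basisCoord_monomial (t : ι) (d : σ →₀ ℕ) (a : S) :
    basisCoord b t (monomial d a) = monomial d (b.coord t a) := by
  classical
  ext d'
  rw [coeff_basisCoord, coeff_monomial, coeff_monomial, apply_ite (b.coord t), map_zero]

theorem basisCoord_map_mul (t : ι) (p : MvPolynomial σ R) (f : MvPolynomial σ S) :
    basisCoord b t (map (algebraMap R S) p * f) = p * basisCoord b t f := by
  classical
  ext d
  simp only [coeff_basisCoord, coeff_mul, coeff_map, map_sum, ← Algebra.smul_def, map_smul,
    smul_eq_mul]

theorem basisCoord_map (t : ι) (p : MvPolynomial σ R) :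
    basisCoord b t (map (algebraMap R S) p) = C (b.coord t 1) * p := by
  ext d
  rw [coeff_basisCoord, coeff_map, coeff_C_mul, Algebra.algebraMap_eq_smul_one, map_smul,
    smul_eq_mul, mul_comm]

theorem eval_basisCoord (t : ι) (x : σ → R) (f : MvPolynomial σ S) :
    eval x (basisCoord b t f) = b.coord t (eval (algebraMap R S ∘ x) f) := by
  induction f using MvPolynomial.induction_on' with
  | monomial d a =>
    simp only [basisCoord_monomial, eval_monomial, Function.comp_apply, ← map_pow,
      ← map_finsuppProd, mul_comm a, ← Algebra.smul_def, map_smul, smul_eq_mul]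
    exact mul_comm _ _
  | add f g hf hg => simp only [map_add, hf, hg]

open scoped Classical in
noncomputable def basisCoordSupport (f : MvPolynomial σ S) : Finset ι :=
  f.support.biUnion fun d => (b.repr (coeff d f)).support

theorem sum_basisCoordSupport (f : MvPolynomial σ S) :
    ∑ t ∈ basisCoordSupport b f, map (algebraMap R S) (basisCoord b t f) * C (b t) = f := by
  classical
  ext d
  have hsupp : b.repr (coeff d f) ∈ Finsupp.supported R R (basisCoordSupport b f : Set ι) := by
    by_cases hd : coeff d f = 0
    · simp [hd]
    · exact (Finsupp.mem_supported R _).2 <| Finset.coe_subset.2 <|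
        Finset.subset_biUnion_of_mem (fun d => (b.repr (coeff d f)).support) (mem_support_iff.2 hd)
  conv_rhs => rw [← b.linearCombination_repr (coeff d f),
    Finsupp.linearCombination_apply_of_mem_supported R hsupp]
  simp only [coeff_sum, mul_comm _ (C _), coeff_C_mul, coeff_map, coeff_basisCoord,
    Algebra.smul_def, Algebra.commutes, Module.Basis.coord_apply]

theorem mem_map_ideal_iff_forall_basisCoord_mem (J : Ideal (MvPolynomial σ R))
    (f : MvPolynomial σ S) :
    f ∈ J.map (map (algebraMap R S)) ↔ ∀ t, basisCoord b t f ∈ J := by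
  refine ⟨fun hf => ?_, fun h => ?_⟩
  · induction hf using Submodule.span_induction with
    | mem g hg =>
      obtain ⟨p, hp, rfl⟩ := hg
      exact fun t => (basisCoord_map b t p).symm ▸ J.mul_mem_left _ hp
    | zero => simp
    | add g g' _ _ hg hg' =>
      exact fun t => (map_add (basisCoord b t) g g').symm ▸ J.add_mem (hg t) (hg' t)
    | smul r g _ hg =>
      intro t
      rw [smul_eq_mul, ← sum_basisCoordSupport b g, Finset.mul_sum, map_sum]
      refine J.sum_mem fun s _ => ?_
      rw [mul_left_comm, basisCoord_map_mul]
      exact J.mul_mem_right _ (hg s)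
  · rw [← sum_basisCoordSupport b f]
    exact Ideal.sum_mem _ fun t _ => Ideal.mul_mem_right _ _ (Ideal.mem_map_of_mem _ (h t))

end BasisCoord

theorem map_ideal_iInf {R S σ κ : Type*} [CommRing R] [CommRing S] [Algebra R S] [Module.Free R S]
    (Q : κ → Ideal (MvPolynomial σ R)) :
    (⨅ i, Q i).map (map (algebraMap R S)) = ⨅ i, (Q i).map (map (algebraMap R S)) := by
  ext f
  simp only [Ideal.mem_iInf, mem_map_ideal_iff_forall_basisCoord_mem (Module.Free.chooseBasis R S)]
  exact forall_comm

theorem map_ideal_le_ker_eval {R S σ : Type*} [CommRing R] [CommRing S] (φ : R →+* S)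
    {J : Ideal (MvPolynomial σ R)} {x : σ → R} (hJ : J ≤ RingHom.ker (eval x)) :
    J.map (map φ) ≤ RingHom.ker (eval (φ ∘ x)) := by
  refine Ideal.map_le_of_le_comap fun p hp => ?_
  rw [Ideal.mem_comap, RingHom.mem_ker, ← map_eval, RingHom.mem_ker.1 (hJ hp), map_zero]

section Field

variable {K L σ : Type*} [Field K] [CommRing L] [Algebra K L]

theorem comap_map_ideal [Nontrivial L] (J : Ideal (MvPolynomial σ K)) :
    (J.map (map (algebraMap K L))).comap (map (algebraMap K L)) = J := by
  refine le_antisymm (fun p hp => ?_) Ideal.le_comap_map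
  let b := Module.Free.chooseBasis K L
  obtain ⟨t, ht⟩ : ∃ t, b.coord t 1 ≠ 0 := by
    by_contra! h
    exact one_ne_zero (b.ext_elem fun t => by simpa using h t)
  have := (mem_map_ideal_iff_forall_basisCoord_mem b J _).1 hp t
  rwa [basisCoord_map, Ideal.unit_mul_mem_iff_mem _ (ht.isUnit.map C)] at this

theorem map_ideal_le_map_ideal_iff [Nontrivial L] {J J' : Ideal (MvPolynomial σ K)} :
    J.map (map (algebraMap K L)) ≤ J'.map (map (algebraMap K L)) ↔ J ≤ J' :=
  ⟨fun h => comap_map_ideal (L := L) J ▸ comap_map_ideal (L := L) J' ▸ Ideal.comap_mono h,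
    Ideal.map_mono⟩

theorem map_ideal_injective [Nontrivial L] :
    Function.Injective (Ideal.map (map (algebraMap K L)) : Ideal (MvPolynomial σ K) → _) :=
  Function.LeftInverse.injective comap_map_ideal

theorem isPrime_map_ideal [IsAlgClosed K] [IsDomain L] [Finite σ] (P : Ideal (MvPolynomial σ K))
    [P.IsPrime] : (P.map (map (algebraMap K L))).IsPrime := by
  let b := Module.Free.chooseBasis K L
  let A (f : MvPolynomial σ L) : Ideal (MvPolynomial σ K) :=
    Ideal.span (Set.range fun t => basisCoord b t f)
  have mem_iff (f : MvPolynomial σ L) : f ∈ P.map (map (algebraMap K L)) ↔ A f ≤ P := by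
    rw [mem_map_ideal_iff_forall_basisCoord_mem b, Ideal.span_le, Set.range_subset_iff]
    rfl
  have le_ker (f : MvPolynomial σ L) (x : σ → K) (hf : eval (algebraMap K L ∘ x) f = 0) :
      A f ≤ RingHom.ker (eval x) := by
    rw [Ideal.span_le, Set.range_subset_iff]
    intro t
    rw [SetLike.mem_coe, RingHom.mem_ker, eval_basisCoord, hf, map_zero]
  refine Ideal.isPrime_iff.2 ⟨fun h => ?_, fun {p q} hpq => ?_⟩
  · exact Ideal.IsPrime.ne_top ‹_› (by rw [← comap_map_ideal (L := L) P, h, Ideal.comap_top])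
  have hA : A p * A q ≤ P := by
    refine fun g hg => (IsPrime.vanishingIdeal_zeroLocus (K := K) P).le fun x hx => ?_
    have hPx : P ≤ RingHom.ker (eval x) := fun r hr => by simpa using hx r hr
    have hpqx := map_ideal_le_ker_eval (algebraMap K L) hPx hpq
    rw [RingHom.mem_ker, map_mul] at hpqx
    suffices g ∈ RingHom.ker (eval x) by simpa using this
    rcases mul_eq_zero.1 hpqx with h | h
    · exact le_ker p x h (Ideal.mul_le_left hg)
    · exact le_ker q x h (Ideal.mul_le_right hg)
  simpa only [mem_iff] using ‹P.IsPrime›.mul_le.1 hA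

end Field

end MvPolynomial

theorem stmt5_general (K L : Type*) [Field K] [Field L] [IsAlgClosed K]
    [Algebra K L] (n : ℕ) (m : ℕ)
    (I : Ideal (MvPolynomial (Fin n) K))
    (P : Fin m → Ideal (MvPolynomial (Fin n) K))
    (hprime : ∀ i, (P i).IsPrime)
    (hdistinct : Function.Injective P)
    (hmin : ∀ i : Fin m, ¬ ((⨅ j : {j : Fin m // j ≠ i}, P (j : Fin m)) ≤ P i))
    (hdec : I = ⨅ i, P i) :
    I.map (MvPolynomial.map (algebraMap K L)) =
        (⨅ i, (P i).map (MvPolynomial.map (algebraMap K L))) ∧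
    (I.map (MvPolynomial.map (algebraMap K L))).IsRadical ∧
    (∀ i, ((P i).map (MvPolynomial.map (algebraMap K L))).IsPrime) ∧
    Function.Injective (fun i => (P i).map (MvPolynomial.map (algebraMap K L))) ∧
    (∀ i : Fin m, ¬ ((⨅ j : {j : Fin m // j ≠ i},
        (P (j : Fin m)).map (MvPolynomial.map (algebraMap K L))) ≤
        (P i).map (MvPolynomial.map (algebraMap K L)))) := by
  have hmap : I.map (map (algebraMap K L)) = ⨅ i, (P i).map (map (algebraMap K L)) := by
    rw [hdec, map_ideal_iInf]
  have hprime' (i : Fin m) : ((P i).map (map (algebraMap K L))).IsPrime :=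
    have := hprime i
    isPrime_map_ideal (P i)
  refine ⟨hmap, hmap ▸ Ideal.isRadical_iInf _ fun i => (hprime' i).isRadical, hprime',
    map_ideal_injective.comp hdistinct, fun i => ?_⟩
  rw [← map_ideal_iInf, map_ideal_le_map_ideal_iff]
  exact hmin i

/-- extension of a minimal prime decomposition of a radical ideal along an
extension `K ⊆ L` of algebraically closed fields. -/
theorem stmt5 (K L : Type*) [Field K] [Field L] [IsAlgClosed K] [IsAlgClosed L]
    [Algebra K L] (n : ℕ) (m : ℕ) (hm : 0 < m)
    (I : Ideal (MvPolynomial (Fin n) K)) (hI : I.IsRadical)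
    (P : Fin m → Ideal (MvPolynomial (Fin n) K))
    (hprime : ∀ i, (P i).IsPrime)
    (hdistinct : Function.Injective P)
    (hmin : ∀ i : Fin m, ¬ ((⨅ j : {j : Fin m // j ≠ i}, P (j : Fin m)) ≤ P i))
    (hdec : I = ⨅ i, P i) :
    I.map (MvPolynomial.map (algebraMap K L)) =
        (⨅ i, (P i).map (MvPolynomial.map (algebraMap K L))) ∧
    (I.map (MvPolynomial.map (algebraMap K L))).IsRadical ∧
    (∀ i, ((P i).map (MvPolynomial.map (algebraMap K L))).IsPrime) ∧
    Function.Injective (fun i => (P i).map (MvPolynomial.map (algebraMap K L))) ∧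
    (∀ i : Fin m, ¬ ((⨅ j : {j : Fin m // j ≠ i},
        (P (j : Fin m)).map (MvPolynomial.map (algebraMap K L))) ≤
        (P i).map (MvPolynomial.map (algebraMap K L)))) :=
  stmt5_general K L n m I P hprime hdistinct hmin hdec
end

section
/- Let K be a field, let r, n, D be natural numbers with r ≤ n, and consider the polynomial ring K[T_0,…,T_r, U_{0,0},…,U_{0,n},…,U_{r,0},…,U_{r,n}], whose monomials are ordered by the graded lexicographic order induced by T_0 > U_{0,0} > ⋯ > U_{0,n} > T_1 > U_{1,0} > ⋯ > U_{1,n} > ⋯ > T_r > U_{r,0} > ⋯ > U_{r,n}. Let C ∈ K[U_{0,0},…,U_{r,n}] be a polynomial such that every monomial of C is less than or equal to U_{0,0}^D·U_{1,1}^D·⋯·U_{r,r}^D in this order, and such that the coefficient of U_{0,0}^D·U_{1,1}^D·⋯·U_{r,r}^D in C is 1. Let P = (−1)^D·C(v_0,…,v_r), where for each i the substitution v_i replaces U_{i,0} by U_{i,0} − T_i and leaves U_{i,1},…,U_{i,n} unchanged. Then the leading monomial of P is T_0^D·U_{1,1}^D·⋯·U_{r,r}^D and its leading coefficient is 1. 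-/
/-!
Send `T_i` to `U_{i,0}` and call this projection `π`. Every substituted variable `v_x` is
homogeneous of weight `x` for the grading of `K[T, U]` by `π`, so a monomial `m'` of `C(v)` can
only come from the monomial `π m'` of `C`. Hence the coefficient of
`M' = T₀^D U_{1,1}^D ⋯ U_{r,r}^D` in `P` is `(-1)^D` times its coefficient in
`v_{0,0}^D ⋯ v_{r,r}^D = (U_{0,0} - T₀)^D U_{1,1}^D ⋯ U_{r,r}^D`, that is `1`.
Every other monomial `m'` of `P` lies over a monomial `π m' ≤ M` of `C`. The order on `K[T, U]`
refines the order on `K[U]` along `π`, and `M'` puts all its weight on the first variable of each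
fibre of `π`; comparing `m'` and `M'` at the first variable where they differ gives `m' < M'`.
-/

open MvPolynomial

/-- Graded lexicographic "less than" on monomial exponents, where `idx` gives the
position of each variable in the variable ordering (smaller index = more significant). -/
def grlexLt {σ : Type*} (idx : σ → ℕ) (a b : σ →₀ ℕ) : Prop :=
  (a.sum fun _ e => e) < (b.sum fun _ e => e) ∨
  ((a.sum fun _ e => e) = (b.sum fun _ e => e) ∧
    ∃ x, a x < b x ∧ ∀ y, idx y < idx x → a y = b y)

/-- Position of the variable `U_{i,j}` in the ordering `U_{0,0} > ⋯ > U_{r,n}`. -/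
def idxU (r n : ℕ) (x : Fin (r + 1) × Fin (n + 1)) : ℕ :=
  (x.1 : ℕ) * (n + 1) + (x.2 : ℕ)

/-- Position of a variable of `K[T₀,…,T_r,U_{0,0},…,U_{r,n}]` in the ordering
`T₀ > U_{0,0} > ⋯ > U_{0,n} > T₁ > ⋯ > T_r > U_{r,0} > ⋯ > U_{r,n}`. -/
def idxTU (r n : ℕ) (x : Fin (r + 1) ⊕ (Fin (r + 1) × Fin (n + 1))) : ℕ :=
  Sum.elim (fun i : Fin (r + 1) => (i : ℕ) * (n + 2))
    (fun ij : Fin (r + 1) × Fin (n + 1) => (ij.1 : ℕ) * (n + 2) + 1 + (ij.2 : ℕ)) x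

/-- The substitution `U_{i,0} ↦ U_{i,0} − T_i`, `U_{i,j} ↦ U_{i,j}` for `j ≠ 0`,
landing in `K[T₀,…,T_r,U_{0,0},…,U_{r,n}]`. -/
noncomputable def substTU (K : Type*) [CommRing K] (r n : ℕ)
    (C : MvPolynomial (Fin (r + 1) × Fin (n + 1)) K) :
    MvPolynomial (Fin (r + 1) ⊕ (Fin (r + 1) × Fin (n + 1))) K :=
  MvPolynomial.aeval (fun x : Fin (r + 1) × Fin (n + 1) =>
    if x.2 = 0 then
      MvPolynomial.X (Sum.inr x) - MvPolynomial.X (Sum.inl x.1)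
    else MvPolynomial.X (Sum.inr x)) C

namespace Finsupp

variable {α β M : Type*}

theorem mapDomain_apply_eq_sum_of_support_subset [DecidableEq β] [AddCommMonoid M]
    (f : α → β) {x : α →₀ M} {S : Finset α} (hS : x.support ⊆ S) (b : β) :
    x.mapDomain f b = ∑ i ∈ S with f i = b, x i := by
  rw [mapDomain, sum_apply, sum_of_support_subset x hS _ (by simp), Finset.sum_filter]
  simp only [single_apply]

theorem weight_single_one_eq_mapDomain (f : α → β) (x : α →₀ ℕ) :
    weight (fun a => single (f a) 1) x = x.mapDomain f := by
  simp [weight_apply, mapDomain, smul_single]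

theorem exists_minimal_apply_ne {σ : Type*} (idx : σ → ℕ) {a b : σ →₀ ℕ} (hab : a ≠ b) :
    ∃ x, a x ≠ b x ∧ ∀ y, idx y < idx x → a y = b y := by
  obtain ⟨x, hx, hmin⟩ := (InvImage.wf idx wellFounded_lt).has_min {x | a x ≠ b x}
    (Finsupp.ne_iff.mp hab)
  exact ⟨x, hx, fun y hy => by_contra fun hne => hmin y hne hy⟩

end Finsupp

open Finsupp

section grlex

variable {σ : Type*} {idx : σ → ℕ} {a b : σ →₀ ℕ}

theorem degree_le_of_eq_or_grlexLt (hab : a = b ∨ grlexLt idx a b) : a.degree ≤ b.degree := by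
  rcases hab with rfl | hlt | ⟨heq, -⟩
  exacts [le_rfl, hlt.le, heq.le]

theorem apply_le_of_eq_or_grlexLt (hidx : Function.Injective idx)
    (hab : a = b ∨ grlexLt idx a b) (hdeg : a.degree = b.degree) {z : σ}
    (hz : ∀ y, idx y < idx z → a y = b y) : a z ≤ b z := by
  rcases hab with rfl | hlt | ⟨-, x, hx, hxb⟩
  · exact le_rfl
  · exact absurd hdeg hlt.ne
  rcases lt_trichotomy (idx z) (idx x) with h | h | h
  · exact (hxb z h).le
  · exact hidx h ▸ hx.le
  · exact absurd (hz x h) hx.ne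

end grlex

section Fibres

variable {σ τ : Type*} (π : τ → σ) {idxσ : σ → ℕ} {idxτ : τ → ℕ} {m M : τ →₀ ℕ} {x : τ}

theorem mapDomain_apply_eq_of_forall_lt
    (hmono : ∀ y y', idxτ y ≤ idxτ y' → idxσ (π y) ≤ idxσ (π y'))
    (hbefore : ∀ y, idxτ y < idxτ x → m y = M y) {z : σ} (hz : idxσ z < idxσ (π x)) :
    m.mapDomain π z = M.mapDomain π z := by
  classical
  rw [mapDomain_apply_eq_sum_of_support_subset π (Finset.subset_union_left (s₂ := M.support)),
    mapDomain_apply_eq_sum_of_support_subset π (Finset.subset_union_right (s₁ := m.support))]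
  refine Finset.sum_congr rfl fun y hy => hbefore y ?_
  by_contra! hxy
  have := hmono _ _ hxy
  rw [(Finset.mem_filter.mp hy).2] at this
  omega

theorem apply_le_of_mapDomain_apply_le (hτ : Function.Injective idxτ)
    (hM : ∀ y y', π y = π y' → idxτ y < idxτ y' → M y' = 0)
    (hbefore : ∀ y, idxτ y < idxτ x → m y = M y)
    (hle : m.mapDomain π (π x) ≤ M.mapDomain π (π x)) : m x ≤ M x := by
  classical
  set F := {y ∈ insert x (m.support ∪ M.support) | π y = π x}
  rw [mapDomain_apply_eq_sum_of_support_subset π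
      ((Finset.subset_union_left (s₂ := M.support)).trans (Finset.subset_insert x _)),
    mapDomain_apply_eq_sum_of_support_subset π
      ((Finset.subset_union_right (s₁ := m.support)).trans (Finset.subset_insert x _)),
    ← Finset.sum_filter_add_sum_filter_not F (fun y => idxτ y < idxτ x) m,
    ← Finset.sum_filter_add_sum_filter_not F (fun y => idxτ y < idxτ x) M] at hle
  have hx : x ∈ {y ∈ F | ¬idxτ y < idxτ x} := by simp [F]
  have hbelow : ∑ y ∈ F with idxτ y < idxτ x, m y = ∑ y ∈ F with idxτ y < idxτ x, M y :=
    Finset.sum_congr rfl fun y hy => hbefore y (Finset.mem_filter.mp hy).2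
  have habove : ∑ y ∈ F with ¬idxτ y < idxτ x, M y = M x := by
    refine Finset.sum_eq_single_of_mem x hx fun y hy hyx => ?_
    simp only [F, Finset.mem_filter, not_lt] at hy
    exact hM x y hy.1.2.symm (lt_of_le_of_ne hy.2 fun h => hyx (hτ h).symm)
  have hx_le : m x ≤ ∑ y ∈ F with ¬idxτ y < idxτ x, m y :=
    Finset.single_le_sum (fun _ _ => Nat.zero_le _) hx
  omega

theorem grlexLt_of_mapDomain (hσ : Function.Injective idxσ) (hτ : Function.Injective idxτ)
    (hmono : ∀ y y', idxτ y ≤ idxτ y' → idxσ (π y) ≤ idxσ (π y'))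
    (hM : ∀ y y', π y = π y' → idxτ y < idxτ y' → M y' = 0)
    (hle : m.mapDomain π = M.mapDomain π ∨ grlexLt idxσ (m.mapDomain π) (M.mapDomain π))
    (hne : m ≠ M) : grlexLt idxτ m M := by
  have hdeg : m.degree ≤ M.degree := by
    simpa only [degree_mapDomain] using degree_le_of_eq_or_grlexLt hle
  rcases hdeg.lt_or_eq with hlt | heq
  · exact Or.inl hlt
  obtain ⟨x, hx, hbefore⟩ := exists_minimal_apply_ne idxτ hne
  refine Or.inr ⟨heq, x, lt_of_le_of_ne ?_ hx, hbefore⟩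
  refine apply_le_of_mapDomain_apply_le π hτ hM hbefore ?_
  exact apply_le_of_eq_or_grlexLt hσ hle (by simpa only [degree_mapDomain])
    fun z hz => mapDomain_apply_eq_of_forall_lt π hmono hbefore hz

end Fibres

section WeightedSubstitution

variable {R σ τ : Type*} [CommSemiring R] {w : τ → σ →₀ ℕ} {v : σ → MvPolynomial τ R}

theorem isWeightedHomogeneous_aeval_monomial
    (hv : ∀ x, IsWeightedHomogeneous w (v x) (single x 1)) (m : σ →₀ ℕ) :
    IsWeightedHomogeneous w (aeval v (monomial m (1 : R))) m := by
  rw [aeval_monomial, map_one, one_mul, Finsupp.prod]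
  convert IsWeightedHomogeneous.prod m.support (fun x => v x ^ m x) (fun x => m x • single x 1)
    fun x _ => (hv x).pow (m x)
  simp only [smul_single, smul_eq_mul, mul_one]
  exact (m.sum_single).symm

theorem coeff_aeval_of_isWeightedHomogeneous
    (hv : ∀ x, IsWeightedHomogeneous w (v x) (single x 1)) (p : MvPolynomial σ R)
    (m' : τ →₀ ℕ) :
    (aeval v p).coeff m' =
      p.coeff (weight w m') * (aeval v (monomial (weight w m') (1 : R))).coeff m' := by
  classical
  induction p using MvPolynomial.induction_on' with
  | monomial m a =>
    rw [← mul_one a, ← C_mul_monomial, map_mul, aeval_C, algebraMap_eq, coeff_C_mul,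
      coeff_C_mul, coeff_monomial]
    split_ifs with h
    · rw [h, mul_one]
    · rw [(isWeightedHomogeneous_aeval_monomial hv m).coeff_eq_zero m' fun h' => h h'.symm]
      simp
  | add p q hp hq => rw [map_add, coeff_add, hp, hq, coeff_add, add_mul]

end WeightedSubstitution

theorem coeff_single_X_sub_X_pow {R σ : Type*} [CommRing R] {u t : σ} (hut : u ≠ t) (D : ℕ) :
    ((X u - X t : MvPolynomial σ R) ^ D).coeff (single t D) = (-1) ^ D := by
  classical
  induction D with
  | zero => simp
  | succ D ih =>
    rw [pow_succ, mul_sub, coeff_sub, coeff_mul_X', coeff_mul_X', if_neg (by simp [hut]),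
      if_pos (by simp), ← single_tsub, Nat.add_sub_cancel, ih]
    ring

theorem Nat.mul_add_le_mul_add_iff {N a a' b b' : ℕ} (hb : b < N) (hb' : b' < N) :
    a * N + b ≤ a' * N + b' ↔ a < a' ∨ a = a' ∧ b ≤ b' := by
  constructor
  · intro h
    rcases lt_trichotomy a a' with ha | rfl | ha
    · exact Or.inl ha
    · exact Or.inr ⟨rfl, by omega⟩
    · nlinarith
  · rintro (ha | ⟨rfl, hb⟩)
    · nlinarith
    · omega

def projU (r n : ℕ) : Fin (r + 1) ⊕ (Fin (r + 1) × Fin (n + 1)) → Fin (r + 1) × Fin (n + 1) :=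
  Sum.elim (fun i => (i, 0)) id

def embTU (r n : ℕ) : Fin (r + 1) ⊕ (Fin (r + 1) × Fin (n + 1)) → Fin (r + 1) × Fin (n + 2) :=
  Sum.elim (fun i => (i, 0)) fun x => (x.1, x.2.succ)

section Indexing

variable {r n : ℕ}

theorem idxU_le_iff {x x' : Fin (r + 1) × Fin (n + 1)} :
    idxU r n x ≤ idxU r n x' ↔ toLex x ≤ toLex x' := by
  rw [Prod.Lex.toLex_le_toLex, idxU, idxU, Nat.mul_add_le_mul_add_iff x.2.isLt x'.2.isLt,
    Fin.lt_def, Fin.le_def, Fin.val_inj]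

theorem idxU_injective : Function.Injective (idxU r n) := fun _ _ h =>
  toLex.injective (le_antisymm (idxU_le_iff.mp h.le) (idxU_le_iff.mp h.ge))

theorem idxTU_eq_idxU_embTU (y : Fin (r + 1) ⊕ (Fin (r + 1) × Fin (n + 1))) :
    idxTU r n y = idxU r (n + 1) (embTU r n y) := by
  rcases y with i | ⟨i, j⟩
  · simp [idxTU, idxU, embTU]
  · simp only [idxTU, idxU, embTU, Sum.elim_inr, Fin.val_succ]
    ring

theorem idxTU_injective : Function.Injective (idxTU r n) := by
  have hemb : Function.Injective (embTU r n) := by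
    rintro (i | ⟨i, j⟩) (i' | ⟨i', j'⟩) h <;>
      simp_all [embTU, Prod.ext_iff, (Fin.succ_ne_zero _).symm]
  rw [show idxTU r n = idxU r (n + 1) ∘ embTU r n from funext idxTU_eq_idxU_embTU]
  exact idxU_injective.comp hemb

theorem idxU_projU_le_of_idxTU_le {y y'} (h : idxTU r n y ≤ idxTU r n y') :
    idxU r n (projU r n y) ≤ idxU r n (projU r n y') := by
  rw [idxTU_eq_idxU_embTU, idxTU_eq_idxU_embTU, idxU_le_iff, Prod.Lex.toLex_le_toLex] at h
  rw [idxU_le_iff, Prod.Lex.toLex_le_toLex]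
  rcases y with i | ⟨i, j⟩ <;> rcases y' with i' | ⟨i', j'⟩ <;>
    simp_all [embTU, projU]

end Indexing

section Substitution

variable {K : Type*} [CommRing K] {r n : ℕ}

variable (K r n) in
noncomputable def substTUVar (x : Fin (r + 1) × Fin (n + 1)) :
    MvPolynomial (Fin (r + 1) ⊕ (Fin (r + 1) × Fin (n + 1))) K :=
  if x.2 = 0 then X (Sum.inr x) - X (Sum.inl x.1) else X (Sum.inr x)

theorem substTU_eq_aeval (C : MvPolynomial (Fin (r + 1) × Fin (n + 1)) K) :
    substTU K r n C = aeval (substTUVar K r n) C := rfl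

theorem isWeightedHomogeneous_substTUVar (x : Fin (r + 1) × Fin (n + 1)) :
    IsWeightedHomogeneous (fun y => single (projU r n y) 1) (substTUVar K r n x)
      (single x 1) := by
  have hX : ∀ y, projU r n y = x →
      IsWeightedHomogeneous (fun y => single (projU r n y) 1) (X y : MvPolynomial _ K)
        (single x 1) := fun y hy => by
    simpa [hy] using isWeightedHomogeneous_X K (fun y => single (projU r n y) 1) y
  unfold substTUVar
  split_ifs with hx
  · exact (hX _ rfl).sub (hX _ (Prod.ext rfl hx.symm))
  · exact hX _ rfl

end Substitution

section Diagonal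

variable {r n : ℕ}

noncomputable def diagU (D : ℕ) (h : r + 1 ≤ n + 1) : (Fin (r + 1) × Fin (n + 1)) →₀ ℕ :=
  ∑ i : Fin (r + 1), single (i, Fin.castLE h i) D

noncomputable def diagTU (D : ℕ) (h : r + 1 ≤ n + 1) :
    (Fin (r + 1) ⊕ (Fin (r + 1) × Fin (n + 1))) →₀ ℕ :=
  single (Sum.inl 0) D + ∑ i ∈ Finset.univ.erase 0, single (Sum.inr (i, Fin.castLE h i)) D

theorem mapDomain_projU_diagTU (D : ℕ) (h : r + 1 ≤ n + 1) :
    (diagTU D h).mapDomain (projU r n) = diagU D h := by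
  rw [diagTU, diagU, mapDomain_add, mapDomain_finsetSum,
    ← Finset.add_sum_erase _ _ (Finset.mem_univ 0)]
  simp [mapDomain_single, projU]

theorem diagTU_apply_inr_zero (D : ℕ) (h : r + 1 ≤ n + 1) (i : Fin (r + 1)) :
    diagTU D h (Sum.inr (i, 0)) = 0 := by
  rw [diagTU, Finsupp.add_apply, finsetSum_apply, single_eq_of_ne (by simp), zero_add]
  refine Finset.sum_eq_zero fun i' hi' => single_eq_of_ne ?_
  simp only [ne_eq, Sum.inr.injEq, Prod.mk.injEq, not_and]
  rintro rfl hi0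
  exact (Finset.mem_erase.mp hi').1 (Fin.ext (by simpa using congrArg Fin.val hi0.symm))

theorem diagTU_eq_zero_of_projU_eq (D : ℕ) (h : r + 1 ≤ n + 1) {y y'}
    (hyy' : projU r n y = projU r n y') (hlt : idxTU r n y < idxTU r n y') :
    diagTU D h y' = 0 := by
  rcases y with i | ⟨i, j⟩ <;> rcases y' with i' | ⟨i', j'⟩ <;>
    simp only [projU, Sum.elim_inl, Sum.elim_inr, id, Prod.mk.injEq, and_true] at hyy'
  · subst hyy'
    exact absurd hlt (lt_irrefl _)
  · obtain ⟨rfl, rfl⟩ := hyy'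
    exact diagTU_apply_inr_zero D h i
  · obtain ⟨rfl, rfl⟩ := hyy'
    simp [idxTU] at hlt
  · obtain ⟨rfl, rfl⟩ := hyy'
    exact absurd hlt (lt_irrefl _)

theorem coeff_aeval_substTUVar_diagU (K : Type*) [CommRing K] (D : ℕ) (h : r + 1 ≤ n + 1) :
    (aeval (substTUVar K r n) (monomial (diagU D h) (1 : K))).coeff (diagTU D h) =
      (-1) ^ D := by
  have hvar : ∀ i ∈ Finset.univ.erase 0, substTUVar K r n (i, Fin.castLE h i) ^ D =
      monomial (single (Sum.inr (i, Fin.castLE h i)) D) 1 := by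
    intro i hi
    have hi0 : Fin.castLE h i ≠ 0 := fun hi0 =>
      (Finset.mem_erase.mp hi).1 (Fin.ext (by simpa using congrArg Fin.val hi0))
    rw [substTUVar, if_neg hi0, X_pow_eq_monomial]
  rw [diagU, monomial_sum_one, map_prod, ← Finset.mul_prod_erase _ _ (Finset.mem_univ 0)]
  simp only [← X_pow_eq_monomial, map_pow, aeval_X]
  rw [Finset.prod_congr rfl hvar, ← monomial_sum_one, diagTU, coeff_mul_monomial, mul_one]
  simpa [substTUVar] using coeff_single_X_sub_X_pow (R := K) Sum.inr_ne_inl D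

end Diagonal

/-- if every monomial of `C` is at most `U_{0,0}^D U_{1,1}^D ⋯ U_{r,r}^D` for
the graded lex order and that monomial has coefficient `1`, then
`P = (−1)^D C(v₀,…,v_r)` has leading monomial `T₀^D U_{1,1}^D ⋯ U_{r,r}^D` with leading
coefficient `1`. -/
theorem stmt9 (K : Type*) [Field K] (r n D : ℕ) (hrn : r ≤ n)
    (C : MvPolynomial (Fin (r + 1) × Fin (n + 1)) K)
    (M : (Fin (r + 1) × Fin (n + 1)) →₀ ℕ)
    (hM : M = ∑ i : Fin (r + 1),
      Finsupp.single (i, Fin.castLE (by omega) i) D)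
    (hmon : ∀ m ∈ C.support, m = M ∨ grlexLt (idxU r n) m M)
    (hcoeff : C.coeff M = 1)
    (P : MvPolynomial (Fin (r + 1) ⊕ (Fin (r + 1) × Fin (n + 1))) K)
    (hP : P = (-1 : MvPolynomial (Fin (r + 1) ⊕ (Fin (r + 1) × Fin (n + 1))) K) ^ D *
      substTU K r n C)
    (M' : (Fin (r + 1) ⊕ (Fin (r + 1) × Fin (n + 1))) →₀ ℕ)
    (hM' : M' = Finsupp.single (Sum.inl 0) D +
      ∑ i ∈ Finset.univ.erase (0 : Fin (r + 1)),
        Finsupp.single (Sum.inr (i, Fin.castLE (by omega) i)) D) :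
    P.coeff M' = 1 ∧ ∀ m ∈ P.support, m ≠ M' → grlexLt (idxTU r n) m M' := by
  have h : r + 1 ≤ n + 1 := by omega
  obtain rfl : M = diagU D h := hM
  obtain rfl : M' = diagTU D h := hM'
  have hcoeffP : ∀ m, P.coeff m = (-1) ^ D * (C.coeff (m.mapDomain (projU r n)) *
      (aeval (substTUVar K r n) (monomial (m.mapDomain (projU r n)) (1 : K))).coeff m) := by
    intro m
    rw [hP, show (-1 : MvPolynomial _ K) ^ D = MvPolynomial.C ((-1) ^ D) by simp, coeff_C_mul,
      substTU_eq_aeval, coeff_aeval_of_isWeightedHomogeneous isWeightedHomogeneous_substTUVar,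
      weight_single_one_eq_mapDomain]
  refine ⟨?_, fun m hm hne => grlexLt_of_mapDomain (projU r n) idxU_injective idxTU_injective
    (fun _ _ => idxU_projU_le_of_idxTU_le) (fun _ _ => diagTU_eq_zero_of_projU_eq D h) ?_ hne⟩
  · rw [hcoeffP, mapDomain_projU_diagTU, hcoeff, one_mul, coeff_aeval_substTUVar_diagU,
      ← pow_add, Even.neg_one_pow ⟨D, rfl⟩]
  · rw [mapDomain_projU_diagTU]
    refine hmon _ (MvPolynomial.mem_support_iff.mpr fun hzero => ?_)
    rw [MvPolynomial.mem_support_iff, hcoeffP, hzero, zero_mul, mul_zero] at hm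
    exact hm rfl
end

section
/- Let K ⊆ L be a field extension and let F, G ∈ K[Y_1,…,Y_s] be polynomials, not both zero. Then the monic GCD of F and G computed in K[Y_1,…,Y_s] is equal to their monic GCD computed in L[Y_1,…,Y_s] (monic with respect to the graded lexicographic order Y_1 > ⋯ > Y_s). -/
/-! Expanding the coefficients of a polynomial over `L` in a `K`-basis of `L` shows that a
polynomial `P` over `K` divides `M` over `L` iff `P` divides each of the `K`-coordinate polynomials
of `M`. Consequently `lcm F G` computed over `K` is still an lcm over `L`, and `gcd * lcm ≈ F * G`
transfers this to the gcd. Leading coefficients are unchanged by an injective coefficient map, so a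
monic gcd over `K` is the monic gcd over `L`. -/

open MvPolynomial

/-- `c` is the leading coefficient of `F` for the graded lexicographic order given by `idx`. -/
def IsLeadCoeff {σ R : Type*} [CommSemiring R] (idx : σ → ℕ)
    (F : MvPolynomial σ R) (c : R) : Prop :=
  c ≠ 0 ∧ ∃ m, F.coeff m = c ∧ ∀ m' ∈ F.support, m' ≠ m → grlexLt idx m' m

/-- `H` is the monic (for the graded lex order given by `idx`) GCD of `F` and `G`. -/
def IsMonicGcd {σ R : Type*} [CommSemiring R] (idx : σ → ℕ)
    (F G H : MvPolynomial σ R) : Prop :=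
  H ∣ F ∧ H ∣ G ∧ (∀ D, D ∣ F → D ∣ G → D ∣ H) ∧ IsLeadCoeff idx H 1

namespace MvPolynomial

variable {σ K L : Type*} [CommSemiring K] [CommSemiring L] [Algebra K L]

noncomputable def mapCoeffs (π : L →ₗ[K] K) (M : MvPolynomial σ L) : MvPolynomial σ K :=
  AddMonoidAlgebra.map π.toAddMonoidHom M

@[simp]
theorem coeff_mapCoeffs (π : L →ₗ[K] K) (M : MvPolynomial σ L) (m : σ →₀ ℕ) :
    (mapCoeffs π M).coeff m = π (M.coeff m) :=
  rfl

theorem mapCoeffs_map_mul (π : L →ₗ[K] K) (P : MvPolynomial σ K) (M : MvPolynomial σ L) :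
    mapCoeffs π (map (algebraMap K L) P * M) = P * mapCoeffs π M := by
  classical
  ext m
  simp only [coeff_mapCoeffs, coeff_mul, map_sum, coeff_map, ← Algebra.smul_def, map_smul,
    smul_eq_mul]

theorem dvd_mapCoeffs_of_map_dvd (π : L →ₗ[K] K) {P : MvPolynomial σ K}
    {M : MvPolynomial σ L} (h : map (algebraMap K L) P ∣ M) : P ∣ mapCoeffs π M := by
  obtain ⟨Q, rfl⟩ := h
  exact ⟨mapCoeffs π Q, mapCoeffs_map_mul π P Q⟩

theorem exists_finset_eq_sum_smul_map_mapCoeffs {ι : Type*} (B : Module.Basis ι K L)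
    (M : MvPolynomial σ L) :
    ∃ t : Finset ι, M = ∑ i ∈ t, B i • map (algebraMap K L) (mapCoeffs (B.coord i) M) := by
  classical
  refine ⟨M.support.biUnion fun m => (B.repr (M.coeff m)).support, ?_⟩
  ext m
  simp only [coeff_sum, coeff_smul, coeff_map, coeff_mapCoeffs, Module.Basis.coord_apply,
    smul_eq_mul, mul_comm (B _), ← Algebra.smul_def]
  by_cases hm : m ∈ M.support
  · rw [← Finsupp.linearCombination_apply_of_mem_supported K _, B.linearCombination_repr]
    exact (Finsupp.mem_supported K _).2 <| Finset.coe_subset.2 <|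
      Finset.subset_biUnion_of_mem (fun m => (B.repr (M.coeff m)).support) hm
  · simp [notMem_support_iff.1 hm]

theorem map_dvd_iff_forall_dvd_mapCoeffs [Module.Free K L] {P : MvPolynomial σ K}
    {M : MvPolynomial σ L} :
    map (algebraMap K L) P ∣ M ↔ ∀ π : L →ₗ[K] K, P ∣ mapCoeffs π M := by
  refine ⟨fun h π => dvd_mapCoeffs_of_map_dvd π h, fun h => ?_⟩
  obtain ⟨t, ht⟩ := exists_finset_eq_sum_smul_map_mapCoeffs (Module.Free.chooseBasis K L) M
  rw [ht]
  refine Finset.dvd_sum fun i _ => ?_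
  rw [smul_eq_C_mul]
  exact dvd_mul_of_dvd_right (map_dvd _ (h _)) _

section GCD

local infixl:50 " ~ᵤ " => Associated

variable [Module.Free K L] [GCDMonoid (MvPolynomial σ K)]

theorem map_lcm_dvd {F G : MvPolynomial σ K} {M : MvPolynomial σ L}
    (hF : map (algebraMap K L) F ∣ M) (hG : map (algebraMap K L) G ∣ M) :
    map (algebraMap K L) (lcm F G) ∣ M :=
  map_dvd_iff_forall_dvd_mapCoeffs.2 fun π =>
    lcm_dvd (dvd_mapCoeffs_of_map_dvd π hF) (dvd_mapCoeffs_of_map_dvd π hG)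

variable [GCDMonoid (MvPolynomial σ L)]

theorem associated_lcm_map (F G : MvPolynomial σ K) :
    Associated (lcm (map (algebraMap K L) F) (map (algebraMap K L) G))
      (map (algebraMap K L) (lcm F G)) :=
  associated_of_dvd_dvd
    (lcm_dvd (map_dvd _ (dvd_lcm_left F G)) (map_dvd _ (dvd_lcm_right F G)))
    (map_lcm_dvd (dvd_lcm_left _ _) (dvd_lcm_right _ _))

theorem associated_gcd_map [Nontrivial L] (F G : MvPolynomial σ K) :
    Associated (gcd (map (algebraMap K L) F) (map (algebraMap K L) G))
      (map (algebraMap K L) (gcd F G)) := by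
  set f := algebraMap K L
  rcases eq_or_ne F 0 with rfl | hF
  · rw [map_zero]
    exact (gcd_zero_left' _).trans ((gcd_zero_left' G).map _).symm
  rcases eq_or_ne G 0 with rfl | hG
  · rw [map_zero]
    exact (gcd_zero_right' _).trans ((gcd_zero_right' F).map _).symm
  have hf : Function.Injective (map (σ := σ) f) :=
    map_injective f (FaithfulSMul.algebraMap_injective K L)
  have hlcm : lcm (map f F) (map f G) ≠ 0 :=
    lcm_ne_zero_iff.2 ⟨(map_ne_zero_iff _ hf).2 hF, (map_ne_zero_iff _ hf).2 hG⟩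
  refine Associated.of_mul_right ?_ (associated_lcm_map F G) hlcm
  calc gcd (map f F) (map f G) * lcm (map f F) (map f G)
      _ ~ᵤ map f F * map f G := gcd_mul_lcm _ _
      _ = map f (F * G) := (map_mul _ _ _).symm
      _ ~ᵤ map f (gcd F G * lcm F G) := ((gcd_mul_lcm F G).map _).symm
      _ = map f (gcd F G) * map f (lcm F G) := map_mul _ _ _

end GCD

end MvPolynomial

theorem IsLeadCoeff.map {σ R S : Type*} [CommSemiring R] [CommSemiring S] {idx : σ → ℕ}
    {F : MvPolynomial σ R} {c : R} (h : IsLeadCoeff idx F c) {f : R →+* S}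
    (hf : Function.Injective f) : IsLeadCoeff idx (MvPolynomial.map f F) (f c) := by
  obtain ⟨hc, m, hm, hlt⟩ := h
  refine ⟨(map_ne_zero_iff f hf).2 hc, m, by rw [coeff_map, hm], fun m' hm' hne => ?_⟩
  exact hlt m' (support_map_subset f F hm') hne

theorem IsMonicGcd.associated_gcd {σ R : Type*} [CommSemiring R] [GCDMonoid (MvPolynomial σ R)]
    {idx : σ → ℕ} {F G H : MvPolynomial σ R} (h : IsMonicGcd idx F G H) :
    Associated H (gcd F G) :=
  associated_of_dvd_dvd (dvd_gcd h.1 h.2.1) (h.2.2.1 _ (gcd_dvd_left F G) (gcd_dvd_right F G))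

theorem IsMonicGcd.map_algebraMap {σ K L : Type*} [CommRing K]
    [UniqueFactorizationMonoid K] [CommRing L] [IsDomain L] [UniqueFactorizationMonoid L]
    [Algebra K L] [Module.Free K L] {idx : σ → ℕ} {F G H : MvPolynomial σ K}
    (h : IsMonicGcd idx F G H) :
    IsMonicGcd idx (map (algebraMap K L) F) (map (algebraMap K L) G)
      (map (algebraMap K L) H) := by
  let := UniqueFactorizationMonoid.toGCDMonoid (MvPolynomial σ K)
  let := UniqueFactorizationMonoid.toGCDMonoid (MvPolynomial σ L)
  refine ⟨map_dvd _ h.1, map_dvd _ h.2.1, fun D hF hG => ?_, ?_⟩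
  · exact (dvd_gcd hF hG).trans
      ((associated_gcd_map F G).trans (h.associated_gcd.map _).symm).dvd
  · simpa using h.2.2.2.map (FaithfulSMul.algebraMap_injective K L)

theorem stmt12_general (K L : Type*) [Field K] [Field L] [Algebra K L] (s : ℕ)
    (F G H : MvPolynomial (Fin s) K)
    (hgcd : IsMonicGcd (fun v : Fin s => (v : ℕ)) F G H) :
    IsMonicGcd (fun v : Fin s => (v : ℕ))
      (MvPolynomial.map (algebraMap K L) F)
      (MvPolynomial.map (algebraMap K L) G)
      (MvPolynomial.map (algebraMap K L) H) :=
  hgcd.map_algebraMap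

/-- the monic GCD (for graded lex) of two polynomials, not both zero, is the
same whether computed over `K` or over a field extension `L` of `K`. -/
theorem stmt12 (K L : Type*) [Field K] [Field L] [Algebra K L] (s : ℕ)
    (F G H : MvPolynomial (Fin s) K) (hFG : ¬ (F = 0 ∧ G = 0))
    (hgcd : IsMonicGcd (fun v : Fin s => (v : ℕ)) F G H) :
    IsMonicGcd (fun v : Fin s => (v : ℕ))
      (MvPolynomial.map (algebraMap K L) F)
      (MvPolynomial.map (algebraMap K L) G)
      (MvPolynomial.map (algebraMap K L) H) :=
  stmt12_general K L s F G H hgcd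
end
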